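/- Fix an integer H ≥ 1 and define α_t = (H+1)/(H+t) for integers t ≥ 1, α_t^0 = ∏_{j=1}^t (1 − α_j), and α_t^i = α_i · ∏_{j=i+1}^t (1 − α_j) for integers 1 ≤ i ≤ t (empty products equal 1). Then for every integer t ≥ 1: ∑_{i=1}^t (α_t^i)² ≤ 2H/t. -/

import Mathlib

open Finset

/-!
The weights `α_t^0, …, α_t^t` are nonnegative and sum to `1`, so `∑_{i ≥ 1} (α_t^i)²`
is at most `max_{i ≥ 1} α_t^i`.
Each `α_t^i` with `i ≥ 1` is at most `2H/t`: for `i = t` this is `α_t ≤ 2H/t`, and passing from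
`t` to `t + 1` multiplies `α_t^i` by `1 - α_{t+1} = t/(H+t+1)`, which turns `2H/t` into
`2H/(H+t+1) ≤ 2H/(t+1)`.
-/

/-- Step size `α_t = (H+1)/(H+t)`. -/
noncomputable def lr (H t : ℕ) : ℝ := (H + 1) / (H + t)

/-- Learning-rate weights `α_t^0 = ∏_{j=1}^t (1 - α_j)` and
`α_t^i = α_i ∏_{j=i+1}^t (1 - α_j)` for `i ≥ 1`. -/
noncomputable def lrW (H t i : ℕ) : ℝ :=
  if i = 0 then ∏ j ∈ Finset.Icc 1 t, (1 - lr H j)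
  else lr H i * ∏ j ∈ Finset.Icc (i + 1) t, (1 - lr H j)

theorem sum_sq_le_of_forall_le_of_sum_le_one {ι : Type*} {s : Finset ι} {w : ι → ℝ} {M : ℝ}
    (hw : ∀ i ∈ s, 0 ≤ w i) (hwM : ∀ i ∈ s, w i ≤ M) (hsum : ∑ i ∈ s, w i ≤ 1) (hM : 0 ≤ M) :
    ∑ i ∈ s, w i ^ 2 ≤ M :=
  calc ∑ i ∈ s, w i ^ 2 ≤ ∑ i ∈ s, M * w i :=
        sum_le_sum fun i hi => by rw [sq]; exact mul_le_mul_of_nonneg_right (hwM i hi) (hw i hi)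
    _ = M * ∑ i ∈ s, w i := (mul_sum s w M).symm
    _ ≤ M := mul_le_of_le_one_right hM hsum

theorem lr_nonneg (H t : ℕ) : 0 ≤ lr H t := by
  unfold lr; positivity

theorem lr_le_one (H : ℕ) {t : ℕ} (ht : 1 ≤ t) : lr H t ≤ 1 := by
  unfold lr
  rw [div_le_one (by positivity)]
  gcongr
  exact_mod_cast ht

theorem one_sub_lr_succ (H t : ℕ) : 1 - lr H (t + 1) = t / (H + t + 1) := by
  unfold lr
  push_cast
  field_simp
  ring

theorem lrW_nonneg (H t i : ℕ) : 0 ≤ lrW H t i := by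
  have hprod : ∀ k, 0 ≤ ∏ j ∈ Icc (k + 1) t, (1 - lr H j) := fun k =>
    prod_nonneg fun j hj => sub_nonneg.2 (lr_le_one H (by grind))
  unfold lrW
  split_ifs
  · exact hprod 0
  · exact mul_nonneg (lr_nonneg H i) (hprod i)

theorem lrW_self (H : ℕ) {t : ℕ} (ht : 1 ≤ t) : lrW H t t = lr H t := by
  rw [lrW, if_neg (by omega), Icc_eq_empty (by omega), prod_empty, mul_one]

theorem lrW_succ (H : ℕ) {t i : ℕ} (hi : i ≤ t) :
    lrW H (t + 1) i = lrW H t i * (1 - lr H (t + 1)) := by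
  unfold lrW
  split_ifs
  · rw [prod_Icc_succ_top (by omega)]
  · rw [prod_Icc_succ_top (by omega), mul_assoc]

theorem sum_range_lrW (H t : ℕ) : ∑ i ∈ range (t + 1), lrW H t i = 1 := by
  induction t with
  | zero => simp [lrW]
  | succ t ih =>
    rw [sum_range_succ, sum_congr rfl fun i hi => lrW_succ H (Nat.lt_succ_iff.1 (mem_range.1 hi)),
      ← sum_mul, ih, lrW_self H (Nat.succ_pos t)]
    ring

theorem sum_Icc_lrW_le_one (H t : ℕ) : ∑ i ∈ Icc 1 t, lrW H t i ≤ 1 := by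
  rw [← sum_range_lrW H t]
  exact sum_le_sum_of_subset_of_nonneg (fun i hi => by grind)
    fun i _ _ => lrW_nonneg H t i

theorem lr_le_two_mul_div {H t : ℕ} (hH : 1 ≤ H) (ht : 1 ≤ t) : lr H t ≤ 2 * H / t := by
  have hH' : (1 : ℝ) ≤ H := by exact_mod_cast hH
  have ht' : (1 : ℝ) ≤ t := by exact_mod_cast ht
  unfold lr
  rw [div_le_div_iff₀ (by positivity) (by positivity)]
  nlinarith

theorem lrW_le_two_mul_div {H : ℕ} (hH : 1 ≤ H) {t i : ℕ} (hi : i ∈ Icc 1 t) :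
    lrW H t i ≤ 2 * H / t := by
  induction t with
  | zero => grind
  | succ t ih =>
    obtain ⟨hi1, hit⟩ := mem_Icc.1 hi
    rcases hit.eq_or_lt with rfl | hlt
    · rw [lrW_self H hi1]
      exact lr_le_two_mul_div hH hi1
    have hit : i ≤ t := Nat.lt_succ_iff.1 hlt
    have ht : (0 : ℝ) < t := by exact_mod_cast hi1.trans hit
    calc lrW H (t + 1) i = lrW H t i * (t / (H + t + 1)) := by rw [lrW_succ H hit, one_sub_lr_succ]
      _ ≤ 2 * H / t * (t / (H + t + 1)) := by
          gcongr
          exact ih (mem_Icc.2 ⟨hi1, hit⟩)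
      _ = 2 * H / (H + t + 1) := by field_simp
      _ ≤ 2 * H / ((t + 1 : ℕ) : ℝ) := by
          push_cast
          gcongr
          linarith

theorem stmt_5_general (H : ℕ) (hH : 1 ≤ H) (t : ℕ) :
    ∑ i ∈ Finset.Icc 1 t, (lrW H t i) ^ 2 ≤ 2 * H / t :=
  sum_sq_le_of_forall_le_of_sum_le_one (fun i _ => lrW_nonneg H t i)
    (fun _ hi => lrW_le_two_mul_div hH hi) (sum_Icc_lrW_le_one H t) (by positivity)

/-- Property (3) of the learning-rate weights: for every `t ≥ 1`,
`∑_{i=1}^t (α_t^i)² ≤ 2H/t`. -/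
theorem stmt_5 (H : ℕ) (hH : 1 ≤ H) (t : ℕ) (ht : 1 ≤ t) :
    ∑ i ∈ Finset.Icc 1 t, (lrW H t i) ^ 2 ≤ 2 * H / t :=
  stmt_5_general H hH t
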